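/- arXiv:1205.3587 — 6 statements merged into one kernel-verified Lean document; each statement's English description precedes it below -/
import Mathlib

section
/- If (G,+,·) is a two-sided brace, then (G,+,*) is a radical ring, where a*b = ab - a - b; conversely, if (R,+,·) is a radical ring, then (R,+,∘) with a∘b = ab + a + b is a two-sided brace. -/
/-- A two-sided brace `(G,+,·)` yields a radical ring via `a*b = ab - a - b`, and
conversely a radical ring `(R,+,·)` yields a two-sided brace via `a∘b = ab + a + b`.
Here a radical ring is a nonunital associative ring in which every element is
quasi-regular (so that `∘` is a group operation with identity `0`). -/
theorem twoSidedBrace_iff_radicalRing :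
    -- Forward direction: a two-sided brace gives a radical ring.
    (∀ (G : Type) (_ : AddCommGroup G) (_ : Group G),
      (∀ a b c : G, a * (b + c) + a = a * b + a * c) →
      (∀ a b c : G, (a + b) * c + c = a * c + b * c) →
      (let star : G → G → G := fun a b => a * b - a - b
       -- `star` is associative and distributive (so `(G,+,star)` is a nonunital ring)
       (∀ a b c : G, star (star a b) c = star a (star b c)) ∧
       (∀ a b c : G, star a (b + c) = star a b + star a c) ∧
       (∀ a b c : G, star (a + b) c = star a c + star b c) ∧
       -- the circle operation of this ring is the brace multiplication
       (∀ a b : G, star a b + a + b = a * b) ∧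
       -- every element is quasi-regular, i.e. the ring is radical
       (∀ a : G, ∃ b : G, star a b + a + b = 1 ∧ star b a + b + a = 1))) ∧
    -- Converse direction: a radical ring gives a two-sided brace.
    (∀ (R : Type) (_ : NonUnitalRing R),
      (∀ a : R, ∃ b : R, a * b + a + b = 0 ∧ b * a + b + a = 0) →
      (let circ : R → R → R := fun a b => a * b + a + b
       -- `(R, circ)` is a group with identity `0`
       (∀ a b c : R, circ (circ a b) c = circ a (circ b c)) ∧
       (∀ a : R, circ 0 a = a) ∧ (∀ a : R, circ a 0 = a) ∧
       (∀ a : R, ∃ b : R, circ a b = 0 ∧ circ b a = 0) ∧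
       -- both brace compatibility laws hold
       (∀ a b c : R, circ a (b + c) + a = circ a b + circ a c) ∧
       (∀ a b c : R, circ (a + b) c + c = circ a c + circ b c))) := by
  constructor
  · intro G _ _ hl hr
    intro star
    -- basic consequences of the brace laws
    have h0l : ∀ a : G, a * 0 = a := by
      intro a
      have h := hl a 0 0
      rw [add_zero] at h
      exact (add_left_cancel h).symm
    have h0r : ∀ c : G, 0 * c = c := by
      intro c
      have h := hr 0 0 c
      rw [add_zero] at h
      exact (add_left_cancel h).symm
    have hl' : ∀ a b c : G, a * (b + c) = a * b + a * c - a := by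
      intro a b c
      rw [eq_sub_iff_add_eq]
      exact hl a b c
    have hr' : ∀ a b c : G, (a + b) * c = a * c + b * c - c := by
      intro a b c
      rw [eq_sub_iff_add_eq]
      exact hr a b c
    have hnl : ∀ a b : G, a * (-b) = a + a - a * b := by
      intro a b
      have h := hl a b (-b)
      rw [add_neg_cancel, h0l] at h
      rw [eq_sub_iff_add_eq, add_comm]
      exact h.symm
    have hnr : ∀ a c : G, (-a) * c = c + c - a * c := by
      intro a c
      have h := hr a (-a) c
      rw [add_neg_cancel, h0r] at h
      rw [eq_sub_iff_add_eq, add_comm]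
      exact h.symm
    have key_l : ∀ a b c : G, (a * b - a - b) * c = (a * b) * c - a * c - b * c + c + c := by
      intro a b c
      have h1 : a * b - a - b = a * b + (-a + -b) := by abel
      rw [h1, hr', hr', hnr, hnr]
      abel
    have key_r : ∀ a b c : G, a * (b * c - b - c) = a * (b * c) - a * b - a * c + a + a := by
      intro a b c
      have h1 : b * c - b - c = b * c + (-b + -c) := by abel
      rw [h1, hl', hl', hnl, hnl]
      abel
    refine ⟨?_, ?_, ?_, ?_, ?_⟩
    · intro a b c
      simp only [star]
      rw [key_l, key_r, mul_assoc]
      abel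
    · intro a b c
      simp only [star]
      rw [hl']
      abel
    · intro a b c
      simp only [star]
      rw [hr']
      abel
    · intro a b
      simp only [star]
      abel
    · intro a
      refine ⟨a⁻¹, ?_, ?_⟩
      · simp only [star, mul_inv_cancel]
        abel
      · simp only [star, inv_mul_cancel]
        abel
  · intro R _ hq
    intro circ
    refine ⟨?_, ?_, ?_, ?_, ?_, ?_⟩
    · intro a b c
      simp only [circ, mul_add, add_mul, mul_assoc]
      abel
    · intro a
      simp only [circ, zero_mul, zero_add, add_zero]
    · intro a
      simp only [circ, mul_zero, add_zero, zero_add]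
    · intro a
      obtain ⟨b, h1, h2⟩ := hq a
      exact ⟨b, h1, h2⟩
    · intro a b c
      simp only [circ, mul_add]
      abel
    · intro a b c
      simp only [circ, add_mul]
      abel
end

section
/- For a left brace G, the map r : G × G → G × G defined by r(x,y) = (λ_x(y), λ_{λ_x(y)}^{-1}(x)) is a non-degenerate involutive set-theoretic solution of the Yang-Baxter equation; in particular r² = id and r₁r₂r₁ = r₂r₁r₂ where r₁ = r × id and r₂ = id × r on G³. -/
class LeftBrace (G : Type*) [AddCommGroup G] [Group G] : Prop where
  left_compat : ∀ a b c : G, a * (b + c) + a = a * b + a * c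

/-- The map `λ_a : b ↦ ab - a` in a left brace. -/
def braceLambda {G : Type*} [AddCommGroup G] [Group G] (a b : G) : G := a * b - a

section Aux

variable {G : Type*} [AddCommGroup G] [Group G] [LeftBrace G]

lemma brace_mul_add (a b c : G) : a * (b + c) = a * b + a * c - a :=
  eq_sub_of_add_eq (LeftBrace.left_compat a b c)

lemma brace_lam_add (a b c : G) :
    braceLambda a (b + c) = braceLambda a b + braceLambda a c := by
  unfold braceLambda
  rw [brace_mul_add]
  abel

lemma brace_lam_zero (a : G) : braceLambda a 0 = 0 := by
  have h := brace_lam_add a 0 0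
  rw [add_zero] at h
  have h2 : braceLambda a 0 + 0 = braceLambda a 0 + braceLambda a 0 := by
    rw [add_zero]; exact h
  exact (add_left_cancel h2).symm

lemma brace_one_eq_zero : (1 : G) = 0 := by
  have h := brace_lam_zero (1 : G)
  unfold braceLambda at h
  rw [one_mul, zero_sub, neg_eq_zero] at h
  exact h

lemma brace_lam_sub (a b c : G) :
    braceLambda a (b - c) = braceLambda a b - braceLambda a c := by
  have h := brace_lam_add a (b - c) c
  rw [sub_add_cancel] at h
  exact eq_sub_of_add_eq h.symm

lemma brace_mul_sub (a b c : G) : a * (b - c) = a * b - a * c + a := by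
  have h := brace_lam_sub a b c
  unfold braceLambda at h
  rw [eq_add_of_sub_eq h]
  abel

lemma brace_lam_lam (a b c : G) :
    braceLambda a (braceLambda b c) = braceLambda (a * b) c := by
  show braceLambda a (b * c - b) = _
  rw [brace_lam_sub]
  unfold braceLambda
  rw [← mul_assoc]
  abel

lemma brace_lam_one (c : G) : braceLambda 1 c = c := by
  unfold braceLambda
  rw [one_mul, brace_one_eq_zero, sub_zero]

lemma brace_lam_lam_inv (u b : G) : braceLambda u (braceLambda u⁻¹ b) = b := by
  rw [brace_lam_lam, mul_inv_cancel, brace_lam_one]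

lemma brace_lam_inv_lam (u b : G) : braceLambda u⁻¹ (braceLambda u b) = b := by
  rw [brace_lam_lam, inv_mul_cancel, brace_lam_one]

lemma second_formula (x y : G) :
    braceLambda (braceLambda x y)⁻¹ x = (braceLambda x y)⁻¹ * (x * y) := by
  set u := braceLambda x y with hu
  have hxy : x * y = u + x := by rw [hu]; unfold braceLambda; abel
  rw [hxy, brace_mul_add, inv_mul_cancel, brace_one_eq_zero]
  unfold braceLambda
  abel

lemma brace_key (x y : G) :
    braceLambda (braceLambda (braceLambda x y)⁻¹ x) y⁻¹ = (braceLambda x y)⁻¹ := by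
  have h2 := second_formula x y
  set u := braceLambda x y with hu
  rw [h2]
  have h3 : u⁻¹ * (x * y) = u⁻¹ * x - u⁻¹ := by rw [← h2]; rfl
  unfold braceLambda
  rw [mul_assoc, mul_inv_cancel_right, h3]
  abel

end Aux

/-- auxiliary: prefix-product coordinates on triples. -/
def ybePhi {G : Type*} [Group G] (p : G × G × G) : G × G × G :=
  (p.1, p.1 * p.2.1, p.1 * p.2.1 * p.2.2)

/-- auxiliary: inverse of `ybePhi`. -/
def ybePsi {G : Type*} [Group G] (p : G × G × G) : G × G × G :=
  (p.1, p.1⁻¹ * p.2.1, p.2.1⁻¹ * p.2.2)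

/-- auxiliary: conjugated `r₁`. -/
def ybeS1 {G : Type*} [AddCommGroup G] (p : G × G × G) : G × G × G :=
  (p.2.1 - p.1, p.2.1, p.2.2)

/-- auxiliary: conjugated `r₂`. -/
def ybeS2 {G : Type*} [AddCommGroup G] (p : G × G × G) : G × G × G :=
  (p.1, p.2.2 - p.2.1 + p.1, p.2.2)

lemma ybePhi_psi {G : Type*} [Group G] (p : G × G × G) : ybePhi (ybePsi p) = p := by
  obtain ⟨a, b, c⟩ := p
  simp [ybePhi, ybePsi, mul_inv_cancel_left]

lemma ybeS_braid {G : Type*} [AddCommGroup G] (p : G × G × G) :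
    ybeS1 (ybeS2 (ybeS1 p)) = ybeS2 (ybeS1 (ybeS2 p)) := by
  obtain ⟨a, b, c⟩ := p
  simp only [ybeS1, ybeS2, Prod.mk.injEq]
  exact ⟨by abel, by abel, trivial⟩

/-- For a left brace `G`, the map `r(x,y) = (λ_x(y), λ_{λ_x(y)}⁻¹(x))` is a
non-degenerate involutive set-theoretic solution of the Yang-Baxter equation:
`r² = id`, all maps `σ_x` and `γ_y` are bijective, and `r₁r₂r₁ = r₂r₁r₂`,
where `r₁ = r × id` and `r₂ = id × r` on `G³`. -/
theorem leftBrace_solution (G : Type*) [AddCommGroup G] [Group G] [LeftBrace G] :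
    let r : G × G → G × G :=
      fun p => (braceLambda p.1 p.2, braceLambda (braceLambda p.1 p.2)⁻¹ p.1)
    let r₁ : G × G × G → G × G × G :=
      fun p => ((r (p.1, p.2.1)).1, (r (p.1, p.2.1)).2, p.2.2)
    let r₂ : G × G × G → G × G × G := fun p => (p.1, r p.2)
    (r ∘ r = id) ∧
    (∀ x : G, Function.Bijective fun y : G => (r (x, y)).1) ∧
    (∀ y : G, Function.Bijective fun x : G => (r (x, y)).2) ∧
    (r₁ ∘ r₂ ∘ r₁ = r₂ ∘ r₁ ∘ r₂) := by
  intro r r₁ r₂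
  have hr : ∀ p : G × G,
      r p = (p.1 * p.2 - p.1, (p.1 * p.2 - p.1)⁻¹ * (p.1 * p.2)) := by
    intro p
    show (braceLambda p.1 p.2, braceLambda (braceLambda p.1 p.2)⁻¹ p.1) = _
    rw [second_formula]
    rfl
  refine ⟨?_, ?_, ?_, ?_⟩
  · -- r ∘ r = id
    funext p
    obtain ⟨x, y⟩ := p
    show r (r (x, y)) = (x, y)
    show (braceLambda (braceLambda x y) (braceLambda (braceLambda x y)⁻¹ x),
        braceLambda
          (braceLambda (braceLambda x y) (braceLambda (braceLambda x y)⁻¹ x))⁻¹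
          (braceLambda x y)) = (x, y)
    rw [brace_lam_lam_inv, brace_lam_inv_lam]
  · -- σ_x bijective
    intro x
    rw [Function.bijective_iff_has_inverse]
    exact ⟨fun z => braceLambda x⁻¹ z,
      fun y => brace_lam_inv_lam x y, fun z => brace_lam_lam_inv x z⟩
  · -- γ_y bijective
    intro y
    rw [Function.bijective_iff_has_inverse]
    refine ⟨fun z => braceLambda (braceLambda z y⁻¹)⁻¹ z, ?_, ?_⟩
    · intro x
      show braceLambda (braceLambda (braceLambda (braceLambda x y)⁻¹ x) y⁻¹)⁻¹
          (braceLambda (braceLambda x y)⁻¹ x) = x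
      rw [brace_key, inv_inv, brace_lam_lam_inv]
    · intro z
      show braceLambda
          (braceLambda (braceLambda (braceLambda z y⁻¹)⁻¹ z) y)⁻¹
          (braceLambda (braceLambda z y⁻¹)⁻¹ z) = z
      have hk := brace_key z y⁻¹
      rw [inv_inv] at hk
      rw [hk, inv_inv, brace_lam_lam_inv]
  · -- Yang–Baxter equation
    have hC1 : ∀ p : G × G × G, r₁ p = ybePsi (ybeS1 (ybePhi p)) := by
      intro p
      obtain ⟨x, y, z⟩ := p
      show ((r (x, y)).1, (r (x, y)).2, z) = _
      rw [hr (x, y)]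
      simp [ybePsi, ybeS1, ybePhi, mul_assoc, inv_mul_cancel_left]
    have hC2 : ∀ p : G × G × G, r₂ p = ybePsi (ybeS2 (ybePhi p)) := by
      intro p
      obtain ⟨x, y, z⟩ := p
      show (x, r (y, z)) = _
      rw [hr (y, z)]
      have hx : x * y * z - x * y + x = x * (y * z - y) := by
        rw [brace_mul_sub, ← mul_assoc]
      simp only [ybePsi, ybeS2, ybePhi, hx]
      refine Prod.ext rfl (Prod.ext ?_ ?_)
      · simp [inv_mul_cancel_left]
      · simp [mul_inv_rev, mul_assoc, inv_mul_cancel_left]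
    funext p
    show r₁ (r₂ (r₁ p)) = r₂ (r₁ (r₂ p))
    rw [hC1, hC2, hC1, hC2, hC1, hC2, ybePhi_psi, ybePhi_psi, ybePhi_psi,
      ybePhi_psi, ybeS_braid]
end

section
/- Let X be a nonempty set and r(x,y) = (σ_x(y), γ_y(x)) with each σ_x bijective and r² = id. Then r satisfies the braided equation r₁r₂r₁ = r₂r₁r₂ if and only if σ_x ∘ σ_{σ_x^{-1}(y)} = σ_y ∘ σ_{σ_y^{-1}(x)} for all x,y in X. -/
theorem Equiv.Perm.apply_inv_self {α : Type*} (f : Equiv.Perm α) (x : α) : f (f⁻¹ x) = x :=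
  f.apply_symm_apply x

theorem Equiv.Perm.inv_apply_self {α : Type*} (f : Equiv.Perm α) (x : α) : f⁻¹ (f x) = x :=
  f.symm_apply_apply x

/-- Let `X` be a nonempty set and `r(x,y) = (σ_x(y), γ_y(x))` with each `σ_x`
bijective and `r² = id`. Then `r` satisfies the braided equation
`r₁r₂r₁ = r₂r₁r₂` if and only if
`σ_x ∘ σ_{σ_x⁻¹(y)} = σ_y ∘ σ_{σ_y⁻¹(x)}` for all `x, y ∈ X`. -/
theorem braided_iff_sigma_condition (X : Type*) [Nonempty X]
    (σ : X → Equiv.Perm X) (γ : X → X → X)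
    (r : X × X → X × X)
    (hr : ∀ x y : X, r (x, y) = (σ x y, γ y x))
    (hinv : r ∘ r = id) :
    (let r₁ : X × X × X → X × X × X :=
       fun p => ((r (p.1, p.2.1)).1, (r (p.1, p.2.1)).2, p.2.2)
     let r₂ : X × X × X → X × X × X := fun p => (p.1, r p.2)
     r₁ ∘ r₂ ∘ r₁ = r₂ ∘ r₁ ∘ r₂) ↔
    (∀ x y : X, ⇑(σ x) ∘ ⇑(σ ((σ x)⁻¹ y)) = ⇑(σ y) ∘ ⇑(σ ((σ y)⁻¹ x))) := by
  have hA : ∀ x y : X, σ (σ x y) (γ y x) = x := by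
    intro x y
    have h := congrFun hinv (x, y)
    simp only [Function.comp_apply, hr, id_eq] at h
    exact congrArg Prod.fst h
  have hγ : ∀ x y : X, γ y x = (σ (σ x y))⁻¹ x := by
    intro x y
    have h := congrArg (⇑(σ (σ x y))⁻¹) (hA x y)
    simpa using h
  constructor
  · -- braid ⇒ condition
    intro H x y
    funext z
    have h := congrFun H (x, (σ x)⁻¹ y, z)
    simp only [Function.comp_apply, hr, Prod.mk.injEq] at h
    have h1 := h.1
    rw [hγ x ((σ x)⁻¹ y)] at h1
    simp only [Equiv.Perm.apply_inv_self] at h1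
    simpa using h1.symm
  · -- condition ⇒ braid
    intro hCf
    have hC : ∀ x y z : X, σ x (σ ((σ x)⁻¹ y) z) = σ y (σ ((σ y)⁻¹ x) z) :=
      fun x y z => congrFun (hCf x y) z
    -- (1'): σ_{σ_x y} ∘ σ_{γ_y x} = σ_x ∘ σ_y pointwise
    have L1 : ∀ x y z : X, σ (σ x y) (σ (γ y x) z) = σ x (σ y z) := by
      intro x y z
      rw [hγ x y]
      have h := hC (σ x y) x z
      rwa [Equiv.Perm.inv_apply_self] at h
    -- key pointwise consequence of hC
    have hKey : ∀ x P y : X,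
        (σ P)⁻¹ (σ x y) = σ ((σ P)⁻¹ x) ((σ ((σ x)⁻¹ P))⁻¹ y) := by
      intro x P y
      have h := hC x P ((σ ((σ x)⁻¹ P))⁻¹ y)
      rw [Equiv.Perm.apply_inv_self] at h
      rw [h, Equiv.Perm.inv_apply_self]
    -- component 2
    have L2 : ∀ x y z : X,
        γ (σ (γ y x) z) (σ x y) = σ (γ (σ y z) x) (γ z y) := by
      intro x y z
      rw [hγ (σ x y) (σ (γ y x) z), L1, hγ x (σ y z), hγ y z]
      have h := hKey x (σ x (σ y z)) y
      rwa [Equiv.Perm.inv_apply_self] at h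
    -- component 3
    have L3 : ∀ x y z : X,
        γ z (γ y x) = γ (γ z y) (γ (σ y z) x) := by
      intro x y z
      set u := σ x y with hu
      set P := σ x (σ y z) with hP
      have hγyx : σ (γ y x) z = (σ u)⁻¹ P := by
        have := L1 x y z
        rw [← hu, ← hP] at this
        rw [← this, Equiv.Perm.inv_apply_self]
      -- LHS
      have lhs_eq : γ z (γ y x) = (σ ((σ u)⁻¹ P))⁻¹ ((σ u)⁻¹ x) := by
        rw [hγ (γ y x) z, hγyx, hγ x y, ← hu]
      -- RHS
      have hinner : σ (γ (σ y z) x) (γ z y) = (σ P)⁻¹ u := by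
        rw [← L2 x y z, hγ (σ x y) (σ (γ y x) z), L1, ← hP, ← hu]
      have hgz : γ (σ y z) x = (σ P)⁻¹ x := by
        rw [hγ x (σ y z), ← hP]
      have rhs_eq : γ (γ z y) (γ (σ y z) x)
          = (σ ((σ P)⁻¹ u))⁻¹ ((σ P)⁻¹ x) := by
        rw [hγ (γ (σ y z) x) (γ z y), hinner, hgz]
      rw [lhs_eq, rhs_eq]
      -- use hC at u, P
      set t := (σ ((σ P)⁻¹ u))⁻¹ ((σ P)⁻¹ x) with ht
      have h := hC u P t
      have h2 : σ P (σ ((σ P)⁻¹ u) t) = x := by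
        rw [ht, Equiv.Perm.apply_inv_self, Equiv.Perm.apply_inv_self]
      rw [h2] at h
      have h3 : σ ((σ u)⁻¹ P) t = (σ u)⁻¹ x := by
        rw [← h, Equiv.Perm.inv_apply_self]
      rw [← h3, Equiv.Perm.inv_apply_self]
    -- assemble
    funext p
    obtain ⟨x, y, z⟩ := p
    simp only [Function.comp_apply, hr, Prod.mk.injEq]
    exact ⟨L1 x y z, L2 x y z, L3 x y z⟩
end

section
/- A group G is the multiplicative group of a left brace if and only if there exists a group homomorphism μ : G → Sym(G) such that x·μ(x)^{-1}(y) = y·μ(y)^{-1}(x) for all x,y in G. -/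
/-- A group `G` is the multiplicative group of a left brace if and only if there is a
group homomorphism `μ : G → Sym(G)` such that `x · μ(x)⁻¹(y) = y · μ(y)⁻¹(x)`
for all `x, y ∈ G`. -/
theorem multiplicativeGroup_of_leftBrace_iff (G : Type*) [Group G] :
    (∃ add : G → G → G, ∃ zero : G, ∃ neg : G → G,
      (∀ a b : G, add a b = add b a) ∧
      (∀ a b c : G, add (add a b) c = add a (add b c)) ∧
      (∀ a : G, add zero a = a) ∧
      (∀ a : G, add (neg a) a = zero) ∧
      (∀ a b c : G, add (a * add b c) a = add (a * b) (a * c))) ↔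
    (∃ μ : G →* Equiv.Perm G, ∀ x y : G, x * (μ x)⁻¹ y = y * (μ y)⁻¹ x) := by
  constructor
  · rintro ⟨add, zero, neg, comm, assoc, hzero, hneg, hbrace⟩
    letI : Zero G := ⟨zero⟩
    letI : Add G := ⟨add⟩
    letI : Neg G := ⟨neg⟩
    letI : AddCommGroup G :=
      { add := add
        add_assoc := assoc
        zero := zero
        zero_add := hzero
        add_zero := fun a => (comm a zero).trans (hzero a)
        neg := neg
        neg_add_cancel := hneg
        add_comm := comm
        nsmul := nsmulRec
        zsmul := zsmulRec }
    have hb : ∀ a b c : G, a * (b + c) + a = a * b + a * c := hbrace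
    have hmulzero : ∀ a : G, a * (0 : G) = a := by
      intro a
      have h := hb a 0 0
      rw [add_zero] at h
      exact (add_left_cancel h).symm
    have h01 : (0 : G) = 1 := by
      have h := hmulzero (0 : G)⁻¹
      exact mul_left_cancel (h.trans (mul_one _).symm)
    have hmulneg : ∀ a b : G, a * (-b) = a + a - a * b := by
      intro a b
      have h := hb a b (-b)
      rw [add_neg_cancel, hmulzero] at h
      exact eq_sub_of_add_eq' h.symm
    refine ⟨MonoidHom.mk' (fun x =>
      { toFun := fun z => -x + x * z,
        invFun := fun z => x⁻¹ * (x + z),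
        left_inv := fun z => by
          show x⁻¹ * (x + (-x + x * z)) = z
          rw [add_neg_cancel_left, inv_mul_cancel_left],
        right_inv := fun z => by
          show -x + x * (x⁻¹ * (x + z)) = z
          rw [mul_inv_cancel_left, neg_add_cancel_left] }) ?_, ?_⟩
    · intro x y
      ext z
      show -(x * y) + (x * y) * z = -x + x * (-y + y * z)
      have h1 : x * (-y + y * z) = x * (-y) + x * (y * z) - x :=
        eq_sub_of_add_eq (hb x (-y) (y * z))
      rw [h1, hmulneg x y, ← mul_assoc]
      abel
    · intro x y
      show x * (x⁻¹ * (x + y)) = y * (y⁻¹ * (y + x))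
      rw [mul_inv_cancel_left, mul_inv_cancel_left, add_comm]
  · rintro ⟨μ, hμ⟩
    -- right-commutativity of the induced addition
    have rc : ∀ x y z : G,
        (x * (μ x)⁻¹ y) * (μ (x * (μ x)⁻¹ y))⁻¹ z
          = (x * (μ x)⁻¹ z) * (μ (x * (μ x)⁻¹ z))⁻¹ y := by
      intro x y z
      simp only [map_mul, mul_inv_rev, Equiv.Perm.mul_apply]
      rw [mul_assoc, mul_assoc, hμ ((μ x)⁻¹ y) ((μ x)⁻¹ z)]
    have hassoc : ∀ a b c : G,
        ((a * (μ a)⁻¹ b) * (μ (a * (μ a)⁻¹ b))⁻¹ c)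
          = a * (μ a)⁻¹ (b * (μ b)⁻¹ c) := by
      intro a b c
      rw [hμ a (b * (μ b)⁻¹ c), rc b c a, hμ b a]
    refine ⟨fun a b => a * (μ a)⁻¹ b, 1, fun a => μ a a⁻¹, hμ, hassoc, ?_, ?_, ?_⟩
    · intro a; simp
    · intro a
      show (μ a) a⁻¹ * (μ ((μ a) a⁻¹))⁻¹ a = 1
      rw [← hμ]
      simp
    · intro a b c
      have h1 : a * (b * (μ b)⁻¹ c) = (a * b) * (μ (a * b))⁻¹ (μ a c) := by
        simp [mul_assoc]
      have h2 : a * c = a * (μ a)⁻¹ (μ a c) := by simp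
      show (a * (b * (μ b)⁻¹ c)) * (μ (a * (b * (μ b)⁻¹ c)))⁻¹ a
          = (a * b) * (μ (a * b))⁻¹ (a * c)
      rw [h1, h2, ← hassoc (a * b) a (μ a c)]
      exact rc (a * b) (μ a c) a
end

section
/- Let G be a left brace such that λ_a(a) = a for all a ∈ G. Then G is a two-sided brace, i.e., (a+b)c + c = ac + bc for all a,b,c ∈ G. -/
/-- Let `G` be a left brace with `λ_a(a) = a` (i.e. `a² = a + a`) for all `a ∈ G`.
Then `G` is a two-sided brace: `(a+b)c + c = ac + bc` for all `a, b, c ∈ G`. -/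
theorem twoSided_of_squareFree (G : Type*) [AddCommGroup G] [Group G] [LeftBrace G]
    (hsf : ∀ a : G, a * a = a + a) :
    ∀ a b c : G, (a + b) * c + c = a * c + b * c := by
  have hadd : ∀ a b c : G, a * (b + c) = a * b + a * c - a := fun a b c =>
    eq_sub_of_add_eq (LeftBrace.left_compat a b c)
  have h0 : ∀ a : G, a * 0 = a := by
    intro a
    have h := LeftBrace.left_compat a 0 0
    rw [zero_add] at h
    have h2 : a * 0 + a = a * 0 + a * 0 := h
    exact (add_left_cancel h2).symm
  have h10 : (1 : G) = 0 := by
    have := h0 1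
    rw [one_mul] at this; exact this.symm
  have E1 : ∀ a b : G, b * (a * b) = a + b + b := by
    intro a b
    have h2 : a * (b * (a * b)) = a * b + a * b := by
      rw [← mul_assoc]; exact hsf (a * b)
    have h3 : a * (a + b + b) = a * b + a * b := by
      rw [hadd, hadd, hsf]; abel
    exact mul_left_cancel (h2.trans h3.symm)
  have E2 : ∀ b : G, b⁻¹ = -b := by
    intro b
    have h := E1 b⁻¹ b
    rw [inv_mul_cancel, mul_one] at h
    have h2 : b⁻¹ + b = 0 := add_right_cancel (h.symm.trans (zero_add b).symm)
    exact eq_neg_of_add_eq_zero_left h2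
  have E3 : ∀ a b : G, a * b = (-b) * a + b + b := by
    intro a b
    have h := E1 a b
    have h2 : a * b = b⁻¹ * (a + b + b) := by
      rw [← h, ← mul_assoc, inv_mul_cancel, one_mul]
    have hb : (-b) * b = 0 := by rw [← E2, inv_mul_cancel]; exact h10
    rw [E2] at h2
    rw [h2, hadd, hadd, hb]
    abel
  intro a b c
  rw [E3 (a + b) c, E3 a c, E3 b c, hadd]
  abel
end

section
/- Let N and H be left braces and η : (H,·) → Aut(N) a group homomorphism to the group of brace automorphisms of N. Then the semidirect product group N ⋊_η H, equipped with componentwise addition (g₁,h₁)+(g₂,h₂) = (g₁+g₂, h₁+h₂), is a left brace. -/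
/-- Let `N` and `H` be left braces and `η : (H,·) → Aut(N)` a group homomorphism
into the group of brace automorphisms of `N`. Then the semidirect product group
`N ⋊_η H`, with multiplication `(g₁,h₁)(g₂,h₂) = (g₁·η(h₁)(g₂), h₁h₂)` and
componentwise addition, is a left brace. -/
theorem semidirectProduct_leftBrace (N H : Type*)
    [AddCommGroup N] [Group N] [AddCommGroup H] [Group H]
    (hN : ∀ a b c : N, a * (b + c) + a = a * b + a * c)
    (hH : ∀ a b c : H, a * (b + c) + a = a * b + a * c)
    (η : H →* Equiv.Perm N)
    (hmul : ∀ h : H, ∀ x y : N, η h (x * y) = η h x * η h y)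
    (hadd : ∀ h : H, ∀ x y : N, η h (x + y) = η h x + η h y) :
    let mul' : N × H → N × H → N × H := fun p q => (p.1 * η p.2 q.1, p.2 * q.2)
    -- `mul'` is a group operation with identity `(1,1)`...
    (∀ p q r : N × H, mul' (mul' p q) r = mul' p (mul' q r)) ∧
    (∀ p : N × H, mul' ((1 : N), (1 : H)) p = p) ∧
    (∀ p : N × H, mul' p ((1 : N), (1 : H)) = p) ∧
    (∀ p : N × H, ∃ q : N × H, mul' q p = ((1 : N), (1 : H)) ∧
      mul' p q = ((1 : N), (1 : H))) ∧
    -- ...and together with the componentwise addition it is a left brace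
    (∀ p q r : N × H, mul' p (q + r) + p = mul' p q + mul' p r) := by
  intro mul'
  have hone : ∀ h : H, η h 1 = 1 := by
    intro h
    have := hmul h 1 1
    rw [one_mul] at this
    exact (mul_eq_left.mp this.symm)
  have hinv : ∀ (h : H) (x : N), η h x⁻¹ = (η h x)⁻¹ := by
    intro h x
    have := hmul h x x⁻¹
    rw [mul_inv_cancel, hone] at this
    exact eq_inv_of_mul_eq_one_right this.symm
  have hcomp : ∀ (h h' : H) (x : N), η h (η h' x) = η (h * h') x := by
    intro h h' x
    rw [map_mul]; rfl
  refine ⟨?_, ?_, ?_, ?_, ?_⟩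
  · intro p q r
    simp only [mul', hmul, hcomp, mul_assoc]
  · intro p
    simp [mul']
  · intro p
    simp [mul', hone]
  · intro p
    refine ⟨((η p.2⁻¹ p.1)⁻¹, p.2⁻¹), ?_, ?_⟩
    · simp [mul']
    · have : η p.2 (η p.2⁻¹ p.1) = p.1 := by rw [hcomp, mul_inv_cancel, map_one]; rfl
      simp [mul', hinv, this]
  · intro p q r
    simp only [mul', Prod.fst_add, Prod.snd_add, hadd]
    exact Prod.ext (hN _ _ _) (hH _ _ _)
end
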